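/- arXiv:1912.07481 — 4 statements merged into one kernel-verified Lean document; each statement's English description precedes it below -/
import Mathlib

section
/- Let M be the n×n tridiagonal matrix with M[1][1] = 1+α, M[i][i] = 2+α for i ≥ 2, M[i][i+1] = M[i+1][i] = −1 (α > 0), and let q ∈ (0,1) satisfy q² − (2+α)q + 1 = 0. Define ŷ ∈ ℝⁿ by ŷ_i = qⁱ/(1−q). Then M ŷ = e₁ + (q^{n+1}/(1−q))·e_n. -/
private lemma sum2' {n : ℕ} (f : Fin n → ℝ) (a b : Fin n) (hab : a ≠ b)
    (h0 : ∀ j, j ≠ a → j ≠ b → f j = 0) :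
    ∑ j, f j = f a + f b := by
  rw [← Finset.sum_subset (Finset.subset_univ ({a, b} : Finset (Fin n)))]
  · rw [Finset.sum_insert (by simp [hab]), Finset.sum_singleton]
  · intro x _ hx
    simp only [Finset.mem_insert, Finset.mem_singleton, not_or] at hx
    exact h0 x hx.1 hx.2

private lemma sum3' {n : ℕ} (f : Fin n → ℝ) (a b c : Fin n) (hab : a ≠ b) (hac : a ≠ c)
    (hbc : b ≠ c) (h0 : ∀ j, j ≠ a → j ≠ b → j ≠ c → f j = 0) :
    ∑ j, f j = f a + f b + f c := by
  rw [← Finset.sum_subset (Finset.subset_univ ({a, b, c} : Finset (Fin n)))]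
  · rw [Finset.sum_insert (by simp [hab, hac]), Finset.sum_insert (by simp [hbc]),
      Finset.sum_singleton]
    ring
  · intro x _ hx
    simp only [Finset.mem_insert, Finset.mem_singleton, not_or] at hx
    exact h0 x hx.1 hx.2.1 hx.2.2

/-- Let `M` be the n×n tridiagonal matrix with `M[1][1] = 1+α`,
`M[i][i] = 2+α` for `i ≥ 2`, off-diagonal entries `-1` (`α > 0`), and let
`q ∈ (0,1)` satisfy `q² - (2+α)q + 1 = 0`.  Define `ŷ` by `ŷᵢ = qⁱ/(1-q)`
(1-based: the 0-based coordinate `i` is `q^(i+1)/(1-q)`).  Then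
`M ŷ = e₁ + (q^(n+1)/(1-q)) eₙ`. -/
theorem tridiagonal_approx_solution (n : ℕ) (hn : 0 < n) (α q : ℝ)
    (hα : 0 < α) (hq0 : 0 < q) (hq1 : q < 1)
    (hq : q ^ 2 - (2 + α) * q + 1 = 0)
    (M : Matrix (Fin n) (Fin n) ℝ)
    (hM : ∀ i j : Fin n, M i j =
      if i = j then (if (i : ℕ) = 0 then 1 + α else 2 + α)
      else if (i : ℕ) + 1 = (j : ℕ) ∨ (j : ℕ) + 1 = (i : ℕ) then -1 else 0)
    (yhat : Fin n → ℝ)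
    (hyhat : ∀ i : Fin n, yhat i = q ^ ((i : ℕ) + 1) / (1 - q)) :
    M.mulVec yhat =
      (Pi.single (⟨0, hn⟩ : Fin n) (1 : ℝ) : Fin n → ℝ) +
        (q ^ (n + 1) / (1 - q)) •
          (Pi.single (⟨n - 1, by omega⟩ : Fin n) (1 : ℝ) : Fin n → ℝ) := by
  have h1q : (1 : ℝ) - q ≠ 0 := by linarith
  funext i
  simp only [Matrix.mulVec, dotProduct, Pi.add_apply, Pi.smul_apply, smul_eq_mul,
    Pi.single_apply]
  rcases Nat.lt_or_ge n 2 with h2 | h2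
  · -- n = 1
    have hn1 : n = 1 := by omega
    subst hn1
    rw [Fin.sum_univ_one, hM, hyhat]
    have h0 : (i : ℕ) = 0 := by omega
    simp only [Fin.ext_iff, Fin.val_mk, h0, Fin.val_zero, eq_self_iff_true, true_or, or_true, if_true]
    norm_num
    field_simp
    ring_nf
    linear_combination -hq
  · -- n ≥ 2
    rcases Nat.lt_or_ge (i : ℕ) 1 with hi0 | hi1
    · -- first row
      rw [sum2' _ i (⟨1, by omega⟩ : Fin n)
        (by simp only [ne_eq, Fin.ext_iff, Fin.val_mk]; omega) ?_]
      · rw [hM, hM, hyhat, hyhat]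
        simp only [Fin.ext_iff, Fin.val_mk, eq_self_iff_true, true_or, or_true, if_true]
        split_ifs <;> try (exfalso; omega)
        have h0 : (i : ℕ) = 0 := by omega
        rw [h0]
        norm_num
        field_simp
        ring_nf
        linear_combination -hq
      · intro j hja hjb
        rw [hM]
        rw [if_neg (fun h => hja h.symm),
          if_neg (by
            simp only [ne_eq, Fin.ext_iff, Fin.val_mk] at hja hjb ⊢
            omega)]
        ring
    · rcases Nat.lt_or_ge (i : ℕ) (n - 1) with him | hin
      · -- middle row
        rw [sum3' _ (⟨(i : ℕ) - 1, by omega⟩ : Fin n) i (⟨(i : ℕ) + 1, by omega⟩ : Fin n)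
          (by simp only [ne_eq, Fin.ext_iff, Fin.val_mk]; omega)
          (by simp only [ne_eq, Fin.ext_iff, Fin.val_mk]; omega)
          (by simp only [ne_eq, Fin.ext_iff, Fin.val_mk]; omega) ?_]
        · rw [hM, hM, hM, hyhat, hyhat, hyhat]
          simp only [Fin.ext_iff, Fin.val_mk, eq_self_iff_true, true_or, or_true, if_true]
          split_ifs <;> try (exfalso; omega)
          have hiv : (i : ℕ) - 1 + 1 = (i : ℕ) := by omega
          rw [hiv]
          linear_combination (-(q ^ (i : ℕ)) / (1 - q)) * hq
        · intro j hja hjb hjc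
          rw [hM]
          rw [if_neg (fun h => hjb h.symm),
            if_neg (by
              simp only [ne_eq, Fin.ext_iff, Fin.val_mk] at hja hjc ⊢
              omega)]
          ring
      · -- last row
        rw [sum2' _ (⟨n - 2, by omega⟩ : Fin n) i
          (by simp only [ne_eq, Fin.ext_iff, Fin.val_mk]; omega) ?_]
        · rw [hM, hM, hyhat, hyhat]
          simp only [Fin.ext_iff, Fin.val_mk, eq_self_iff_true, true_or, or_true, if_true]
          split_ifs <;> try (exfalso; omega)
          have e1 : n - 2 + 1 = n - 1 := by omega
          have hi : (i : ℕ) = n - 1 := by omega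
          rw [e1, hi]
          have hpow1 : q ^ (n - 1 + 1) = q ^ (n - 1) * q := by rw [pow_succ]
          have hpow2 : q ^ (n + 1) = q ^ (n - 1) * q ^ 2 := by
            rw [← pow_add]; congr 1; omega
          rw [hpow1, hpow2]
          linear_combination (-(q ^ (n - 1)) / (1 - q)) * hq
        · intro j hja hjb
          rw [hM]
          rw [if_neg (fun h => hjb h.symm),
            if_neg (by
              simp only [ne_eq, Fin.ext_iff, Fin.val_mk] at hja hjb ⊢
              omega)]
          ring
end

section
/- Let M = A² + αI where A² is the tridiagonal matrix with diagonal (1,2,…,2) and off-diagonals −1, and α > 0. Let y* solve M y* = e₁ and ŷ be defined by ŷ_i = qⁱ/(1−q) with q the smaller root of q² − (2+α)q + 1 = 0. Then ‖ŷ − y*‖ ≤ q^{n+1}/(α(1−q)). -/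
noncomputable def extv (n : ℕ) (v : Fin n → ℝ) (k : ℕ) : ℝ :=
  if h : 0 < k ∧ k ≤ n then v ⟨k - 1, by omega⟩ else 0

lemma extv_pos (n : ℕ) (v : Fin n → ℝ) (k : ℕ) (h : 0 < k ∧ k ≤ n) :
    extv n v k = v ⟨k - 1, by omega⟩ := by
  rw [extv, dif_pos h]

lemma extv_zero (n : ℕ) (v : Fin n → ℝ) : extv n v 0 = 0 := by
  rw [extv, dif_neg]; simp

lemma extv_top (n : ℕ) (v : Fin n → ℝ) (k : ℕ) (h : n < k) : extv n v k = 0 := by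
  rw [extv, dif_neg]; omega

lemma extv_idx (n : ℕ) (v : Fin n → ℝ) (i : Fin n) : extv n v ((i : ℕ) + 1) = v i := by
  rw [extv_pos n v _ ⟨Nat.succ_pos _, i.isLt⟩]
  congr 1

lemma mulVec_formula (n : ℕ) (α : ℝ)
    (Asq M : Matrix (Fin n) (Fin n) ℝ)
    (hAsq : ∀ i j : Fin n, Asq i j =
      if i = j then (if (i : ℕ) = 0 then 1 else 2)
      else if (i : ℕ) + 1 = (j : ℕ) ∨ (j : ℕ) + 1 = (i : ℕ) then -1 else 0)
    (hM : M = Asq + α • (1 : Matrix (Fin n) (Fin n) ℝ))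
    (v : Fin n → ℝ) (i : Fin n) :
    M.mulVec v i = ((if (i : ℕ) = 0 then (1:ℝ) else 2) + α) * extv n v ((i : ℕ) + 1)
      - extv n v ((i : ℕ) + 2) - extv n v (i : ℕ) := by
  subst hM
  have hadd : (Asq + α • (1 : Matrix (Fin n) (Fin n) ℝ)).mulVec v i
      = Asq.mulVec v i + α * v i := by
    rw [Matrix.add_mulVec, Matrix.smul_mulVec, Matrix.one_mulVec]
    simp
  rw [hadd]
  have hsplit : ∀ j : Fin n, Asq i j * v j =
      (if i = j then (if (i : ℕ) = 0 then (1:ℝ) else 2) * v j else 0)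
      + (if (i : ℕ) + 1 = (j : ℕ) then -v j else 0)
      + (if (j : ℕ) + 1 = (i : ℕ) then -v j else 0) := by
    intro j
    rw [hAsq i j]
    by_cases h : i = j
    · subst h
      simp
    · have h' : (i : ℕ) ≠ (j : ℕ) := fun hh => h (Fin.ext hh)
      rw [if_neg h]
      by_cases h1 : (i : ℕ) + 1 = (j : ℕ)
      · have h2 : ¬((j : ℕ) + 1 = (i : ℕ)) := by omega
        simp [h, h1, h2]
      · by_cases h2 : (j : ℕ) + 1 = (i : ℕ)
        · simp [h, h1, h2]
        · simp [h, h1, h2]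
  have hmv : Asq.mulVec v i = ∑ j : Fin n, Asq i j * v j := rfl
  rw [hmv]
  rw [Finset.sum_congr rfl (fun j _ => hsplit j)]
  rw [Finset.sum_add_distrib, Finset.sum_add_distrib]
  have S1 : (∑ j : Fin n, if i = j then (if (i : ℕ) = 0 then (1:ℝ) else 2) * v j else 0)
      = (if (i : ℕ) = 0 then (1:ℝ) else 2) * extv n v ((i : ℕ) + 1) := by
    rw [Finset.sum_ite_eq, if_pos (Finset.mem_univ i), extv_idx]
  have S2 : (∑ j : Fin n, if (i : ℕ) + 1 = (j : ℕ) then -v j else 0)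
      = -extv n v ((i : ℕ) + 2) := by
    by_cases h : (i : ℕ) + 1 < n
    · rw [Finset.sum_eq_single (⟨(i : ℕ) + 1, h⟩ : Fin n)]
      · rw [if_pos rfl]
        rw [extv_pos n v _ (by constructor <;> omega)]
        congr 1
      · intro j _ hj
        rw [if_neg]
        intro hc
        exact hj (Fin.ext hc.symm)
      · intro habs; exact absurd (Finset.mem_univ _) habs
    · rw [extv_top n v _ (by omega), neg_zero]
      apply Finset.sum_eq_zero
      intro j _
      rw [if_neg]
      have := j.isLt
      omega
  have S3 : (∑ j : Fin n, if (j : ℕ) + 1 = (i : ℕ) then -v j else 0)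
      = -extv n v (i : ℕ) := by
    by_cases h : 0 < (i : ℕ)
    · rw [Finset.sum_eq_single (⟨(i : ℕ) - 1, by omega⟩ : Fin n)]
      · rw [if_pos (by simp; omega)]
        rw [extv_pos n v _ (by constructor <;> omega)]
      · intro j _ hj
        rw [if_neg]
        intro hc
        apply hj
        apply Fin.ext
        simp
        omega
      · intro habs; exact absurd (Finset.mem_univ _) habs
    · have h0 : (i : ℕ) = 0 := by omega
      rw [h0, extv_zero, neg_zero]
      apply Finset.sum_eq_zero
      intro j _
      rw [if_neg]
      omega
  rw [S1, S2, S3, ← extv_idx n v i]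
  ring

lemma qf_lower (n : ℕ) (hn : 0 < n) (α : ℝ)
    (Asq M : Matrix (Fin n) (Fin n) ℝ)
    (hAsq : ∀ i j : Fin n, Asq i j =
      if i = j then (if (i : ℕ) = 0 then 1 else 2)
      else if (i : ℕ) + 1 = (j : ℕ) ∨ (j : ℕ) + 1 = (i : ℕ) then -1 else 0)
    (hM : M = Asq + α • (1 : Matrix (Fin n) (Fin n) ℝ))
    (x : Fin n → ℝ) :
    α * ∑ i : Fin n, x i ^ 2 ≤ ∑ i : Fin n, M.mulVec x i * x i := by
  obtain ⟨m, rfl⟩ : ∃ m, n = m + 1 := ⟨n - 1, by omega⟩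
  set X : ℕ → ℝ := extv (m + 1) x with hX
  set G : ℕ → ℝ := fun k =>
    ((2 + α) * X (k+1) - X (k+2) - X k - (if k = 0 then X 1 else 0)) * X (k+1) with hG
  have hGi : ∀ i : Fin (m + 1), M.mulVec x i * x i = G (i : ℕ) := by
    intro i
    rw [mulVec_formula _ α Asq M hAsq hM x i]
    simp only [hG]
    rw [← extv_idx _ x i, ← hX]
    by_cases h0 : (i : ℕ) = 0
    · rw [if_pos h0, if_pos h0, h0]
      have hz : X 0 = 0 := extv_zero _ x
      rw [hz]
      ring
    · rw [if_neg h0, if_neg h0]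
      ring
  have hsum : ∑ i : Fin (m + 1), M.mulVec x i * x i = ∑ k ∈ Finset.range (m + 1), G k := by
    rw [Finset.sum_congr rfl (fun i _ => hGi i)]
    exact Fin.sum_univ_eq_sum_range G (m + 1)
  set A1 : ℝ := ∑ k ∈ Finset.range (m + 1), X (k+1) ^ 2 with hA1
  set A2 : ℝ := ∑ k ∈ Finset.range (m + 1), X (k+2) * X (k+1) with hA2
  set A3 : ℝ := ∑ k ∈ Finset.range (m + 1), X k * X (k+1) with hA3
  set B : ℝ := ∑ k ∈ Finset.range (m + 1), (X (k+1) - X (k+2)) ^ 2 with hB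
  have hXtop : X (m + 2) = 0 := extv_top _ _ _ (by omega)
  have hX0 : X 0 = 0 := extv_zero _ _
  have h32 : A3 = A2 := by
    rw [hA3, hA2, Finset.sum_range_succ' (fun k => X k * X (k+1)) m,
        Finset.sum_range_succ (fun k => X (k+2) * X (k+1)) m]
    rw [hX0, hXtop, zero_mul, zero_mul, add_zero, add_zero]
    apply Finset.sum_congr rfl
    intro k _
    ring
  have hsq2 : ∑ k ∈ Finset.range (m + 1), X (k+2) ^ 2 = A1 - X 1 ^ 2 := by
    rw [hA1, Finset.sum_range_succ' (fun k => X (k+1) ^ 2) m,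
        Finset.sum_range_succ (fun k => X (k+2) ^ 2) m]
    rw [hXtop]
    ring
  have hE : ∑ k ∈ Finset.range (m + 1), (if k = 0 then X 1 else 0) * X (k+1) = X 1 ^ 2 := by
    rw [Finset.sum_congr rfl
      (fun k _ => by rw [ite_mul, zero_mul] :
        ∀ k ∈ Finset.range (m + 1), (if k = 0 then X 1 else 0) * X (k+1)
          = if k = 0 then X 1 * X (k+1) else 0)]
    rw [Finset.sum_ite_eq' (Finset.range (m + 1)) 0 (fun k => X 1 * X (k+1))]
    rw [if_pos (Finset.mem_range.mpr (Nat.succ_pos m))]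
    ring
  have hGsum : ∑ k ∈ Finset.range (m + 1), G k = (2 + α) * A1 - A2 - A3 - X 1 ^ 2 := by
    rw [← hE, hA1, hA2, hA3]
    rw [Finset.mul_sum, ← Finset.sum_sub_distrib, ← Finset.sum_sub_distrib,
        ← Finset.sum_sub_distrib]
    apply Finset.sum_congr rfl
    intro k _
    simp only [hG]
    ring
  have hBval : B = A1 - 2 * A2 + (A1 - X 1 ^ 2) := by
    rw [← hsq2, hB, hA1, hA2]
    rw [Finset.mul_sum, ← Finset.sum_sub_distrib, ← Finset.sum_add_distrib]
    apply Finset.sum_congr rfl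
    intro k _
    ring
  have hBnn : (0:ℝ) ≤ B := by
    rw [hB]; exact Finset.sum_nonneg (fun k _ => sq_nonneg _)
  have hxA1 : ∑ i : Fin (m + 1), x i ^ 2 = A1 := by
    rw [hA1, ← Fin.sum_univ_eq_sum_range (fun k => X (k+1) ^ 2) (m + 1)]
    apply Finset.sum_congr rfl
    intro i _
    rw [hX, extv_idx]
  rw [hsum, hGsum, hxA1]
  have hfin : (2 + α) * A1 - A2 - A3 - X 1 ^ 2 = B + α * A1 := by
    rw [hBval, h32]; ring
  rw [hfin]
  linarith

/-- Let `M = A² + αI` where `A²` is the tridiagonal matrix with diagonal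
`(1, 2, …, 2)` and off-diagonals `-1`, and `α > 0`.  Let `y*` solve
`M y* = e₁` and let `ŷᵢ = qⁱ/(1-q)` with `q ∈ (0,1)` the smaller root of
`q² - (2+α)q + 1 = 0`.  Then `‖ŷ - y*‖ ≤ q^(n+1)/(α(1-q))`. -/
theorem approx_solution_error (n : ℕ) (hn : 0 < n) (α q : ℝ)
    (hα : 0 < α) (hq0 : 0 < q) (hq1 : q < 1)
    (hq : q ^ 2 - (2 + α) * q + 1 = 0)
    (Asq M : Matrix (Fin n) (Fin n) ℝ)
    (hAsq : ∀ i j : Fin n, Asq i j =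
      if i = j then (if (i : ℕ) = 0 then 1 else 2)
      else if (i : ℕ) + 1 = (j : ℕ) ∨ (j : ℕ) + 1 = (i : ℕ) then -1 else 0)
    (hM : M = Asq + α • (1 : Matrix (Fin n) (Fin n) ℝ))
    (ystar yhat : EuclideanSpace ℝ (Fin n))
    (hystar : M.mulVec ystar = Pi.single (⟨0, hn⟩ : Fin n) (1 : ℝ))
    (hyhat : ∀ i : Fin n, yhat i = q ^ ((i : ℕ) + 1) / (1 - q)) :
    ‖yhat - ystar‖ ≤ q ^ (n + 1) / (α * (1 - q)) := by
  have h1q : (0:ℝ) < 1 - q := by linarith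
  have h1q' : (1:ℝ) - q ≠ 0 := ne_of_gt h1q
  set c : ℝ := q ^ (n + 1) / (1 - q) with hc
  have hc0 : (0:ℝ) ≤ c := by positivity
  -- values of the extension of yhat
  have hey : ∀ k : ℕ, 0 < k → k ≤ n → extv n (yhat : Fin n → ℝ) k = q ^ k / (1 - q) := by
    intro k hk1 hk2
    rw [extv_pos n _ k ⟨hk1, hk2⟩, hyhat]
    simp only [Fin.val_mk]
    congr 2
    omega
  -- M * yhat
  have hMyhat : ∀ i : Fin n, M.mulVec (yhat : Fin n → ℝ) i =
      (if (i : ℕ) = 0 then (1:ℝ) else 0) + (if (i : ℕ) = n - 1 then c else 0) := by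
    intro i
    rw [mulVec_formula n α Asq M hAsq hM _ i]
    have hi := i.isLt
    by_cases h0 : (i : ℕ) = 0
    · rw [if_pos h0, if_pos h0, h0]
      rw [hey 1 one_pos hn, extv_zero]
      by_cases hl : (0 : ℕ) = n - 1
      · -- n = 1
        have hn1 : n = 1 := by omega
        rw [if_pos hl, extv_top n _ 2 (by omega), hc, hn1]
        field_simp
        linear_combination (-1 : ℝ) * hq
      · rw [if_neg hl, hey 2 (by omega) (by omega)]
        field_simp
        linear_combination (-1 : ℝ) * hq
    · rw [if_neg h0, if_neg h0]
      have hk1 : 0 < (i : ℕ) := Nat.pos_of_ne_zero h0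
      rw [hey ((i : ℕ) + 1) (by omega) (by omega), hey (i : ℕ) hk1 (by omega)]
      by_cases hl : (i : ℕ) = n - 1
      · rw [if_pos hl]
        have hni : n = (i : ℕ) + 1 := by omega
        rw [extv_top n _ ((i : ℕ) + 2) (by omega), hc,
          show q ^ (n + 1) = q ^ ((i : ℕ) + 2) by (congr 1; omega)]
        field_simp
        linear_combination (-q ^ (i : ℕ)) * hq
      · rw [if_neg hl, hey ((i : ℕ) + 2) (by omega) (by omega)]
        field_simp
        linear_combination (-q ^ (i : ℕ)) * hq
  -- the difference vector
  set z : EuclideanSpace ℝ (Fin n) := yhat - ystar with hz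
  have hzi : ∀ i : Fin n, z i = yhat i - ystar i := fun i => rfl
  have hMz : ∀ i : Fin n, M.mulVec (z : Fin n → ℝ) i = (if (i : ℕ) = n - 1 then c else 0) := by
    intro i
    have hsub : M.mulVec (z : Fin n → ℝ) i
        = M.mulVec (yhat : Fin n → ℝ) i - M.mulVec (ystar : Fin n → ℝ) i := by
      rw [hz]
      rw [show ((yhat - ystar : EuclideanSpace ℝ (Fin n)) : Fin n → ℝ)
          = (yhat : Fin n → ℝ) - (ystar : Fin n → ℝ) from rfl]
      rw [Matrix.mulVec_sub]
      rfl
    rw [hsub, hMyhat i, hystar]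
    have hsingle : (Pi.single (⟨0, hn⟩ : Fin n) (1:ℝ) : Fin n → ℝ) i = (if (i : ℕ) = 0 then (1:ℝ) else 0) := by
      rw [Pi.single_apply]
      by_cases h0 : (i : ℕ) = 0
      · rw [if_pos h0, if_pos (Fin.ext h0)]
      · rw [if_neg h0, if_neg (fun hh => h0 (by rw [hh]))]
    rw [hsingle]
    ring
  -- quadratic form computation
  have hQF : ∑ i : Fin n, M.mulVec (z : Fin n → ℝ) i * z i = c * z ⟨n - 1, by omega⟩ := by
    rw [Finset.sum_congr rfl (fun i _ => by rw [hMz i, ite_mul, zero_mul] :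
      ∀ i ∈ Finset.univ, M.mulVec (z : Fin n → ℝ) i * z i
        = if (i : ℕ) = n - 1 then c * z i else 0)]
    rw [Finset.sum_eq_single (⟨n - 1, by omega⟩ : Fin n)]
    · rw [if_pos rfl]
    · intro j _ hj
      rw [if_neg]
      intro hcond
      exact hj (Fin.ext hcond)
    · intro habs; exact absurd (Finset.mem_univ _) habs
  have hnormsq : ‖z‖ ^ 2 = ∑ i : Fin n, z i ^ 2 := by
    rw [EuclideanSpace.norm_eq]
    rw [Real.sq_sqrt (Finset.sum_nonneg fun i _ => sq_nonneg _)]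
    apply Finset.sum_congr rfl
    intro i _
    rw [Real.norm_eq_abs, sq_abs]
  have hlast : |z ⟨n - 1, by omega⟩| ≤ ‖z‖ := by
    have h1 : z ⟨n - 1, by omega⟩ ^ 2 ≤ ‖z‖ ^ 2 := by
      rw [hnormsq]
      exact Finset.single_le_sum (f := fun i => z i ^ 2) (fun i _ => sq_nonneg _)
        (Finset.mem_univ _)
    calc |z ⟨n - 1, by omega⟩| = Real.sqrt (z ⟨n - 1, by omega⟩ ^ 2) :=
          (Real.sqrt_sq_eq_abs _).symm
      _ ≤ Real.sqrt (‖z‖ ^ 2) := Real.sqrt_le_sqrt h1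
      _ = ‖z‖ := Real.sqrt_sq (norm_nonneg _)
  have hchain : α * ‖z‖ ^ 2 ≤ c * ‖z‖ := by
    calc α * ‖z‖ ^ 2 = α * ∑ i : Fin n, z i ^ 2 := by rw [hnormsq]
      _ ≤ ∑ i : Fin n, M.mulVec (z : Fin n → ℝ) i * z i := qf_lower n hn α Asq M hAsq hM _
      _ = c * z ⟨n - 1, by omega⟩ := hQF
      _ ≤ c * |z ⟨n - 1, by omega⟩| := mul_le_mul_of_nonneg_left (le_abs_self _) hc0
      _ ≤ c * ‖z‖ := mul_le_mul_of_nonneg_left hlast hc0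
  have htarget : q ^ (n + 1) / (α * (1 - q)) = c / α := by
    rw [hc, div_div, mul_comm]
  rw [htarget]
  rcases eq_or_lt_of_le (norm_nonneg z) with hz0 | hz0
  · rw [← hz0]
    positivity
  · have h2 : α * ‖z‖ ≤ c := by
      have := hchain
      rw [sq] at this
      nlinarith
    rw [le_div_iff₀ hα, mul_comm]
    exact h2
end

section
/- Let q ∈ (0,1), n ≥ 2, and k ≤ n/2. Define ŷ ∈ ℝⁿ by ŷ_i = qⁱ/(1−q). Then for any vector y ∈ Span{e₁,…,e_k}, ‖y − ŷ‖ ≥ (q^k/√2)·‖ŷ‖. -/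
lemma geom_tail_ge (r : ℝ) (hr0 : 0 ≤ r) (hr1 : r ≤ 1) (n k : ℕ) (hk : 2 * k ≤ n) :
    r ^ k / 2 * ∑ i ∈ Finset.range n, r ^ (i + 1) ≤
      ∑ i ∈ Finset.Ico k n, r ^ (i + 1) := by
  have hkn : k ≤ n - k := by omega
  have hkn' : k ≤ n := by omega
  have htail : ∑ i ∈ Finset.Ico k n, r ^ (i + 1)
      = r ^ k * ∑ i ∈ Finset.range (n - k), r ^ (i + 1) := by
    rw [Finset.sum_Ico_eq_sum_range, Finset.mul_sum]
    apply Finset.sum_congr rfl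
    intro i _
    ring
  have hsplit : ∑ i ∈ Finset.range n, r ^ (i + 1)
      = ∑ i ∈ Finset.range (n - k), r ^ (i + 1)
        + ∑ i ∈ Finset.Ico (n - k) n, r ^ (i + 1) := by
    rw [Finset.range_eq_Ico, ← Finset.sum_Ico_consecutive _ (Nat.zero_le (n - k)) (by omega),
      ← Finset.range_eq_Ico]
  have hIco : ∑ i ∈ Finset.Ico (n - k) n, r ^ (i + 1)
      ≤ ∑ i ∈ Finset.range (n - k), r ^ (i + 1) := by
    have h1 : ∑ i ∈ Finset.Ico (n - k) n, r ^ (i + 1)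
        ≤ ∑ i ∈ Finset.range k, r ^ (i + 1) := by
      rw [Finset.sum_Ico_eq_sum_range]
      have : n - (n - k) = k := by omega
      rw [this]
      apply Finset.sum_le_sum
      intro i _
      exact pow_le_pow_of_le_one hr0 hr1 (by omega)
    refine h1.trans ?_
    apply Finset.sum_le_sum_of_subset_of_nonneg
    · exact Finset.range_subset_range.mpr hkn
    · intro i _ _; positivity
  have hG : ∑ i ∈ Finset.range n, r ^ (i + 1)
      ≤ 2 * ∑ i ∈ Finset.range (n - k), r ^ (i + 1) := by
    rw [hsplit]; linarith
  rw [htail]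
  have hrk : 0 ≤ r ^ k / 2 := by positivity
  calc r ^ k / 2 * ∑ i ∈ Finset.range n, r ^ (i + 1)
      ≤ r ^ k / 2 * (2 * ∑ i ∈ Finset.range (n - k), r ^ (i + 1)) := by
        exact mul_le_mul_of_nonneg_left hG hrk
    _ = r ^ k * ∑ i ∈ Finset.range (n - k), r ^ (i + 1) := by ring

/-- Let `q ∈ (0,1)`, `n ≥ 2`, `k ≤ n/2`, and `ŷᵢ = qⁱ/(1-q)` (1-based; the
0-based coordinate `i` equals `q^(i+1)/(1-q)`).  Then any vector
`y ∈ Span{e₁, …, e_k}` satisfies `‖y - ŷ‖ ≥ (q^k/√2) ‖ŷ‖`. -/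
theorem dist_lower_bound_span (n k : ℕ) (hn : 2 ≤ n) (hk : 2 * k ≤ n)
    (q : ℝ) (hq0 : 0 < q) (hq1 : q < 1)
    (yhat : EuclideanSpace ℝ (Fin n))
    (hyhat : ∀ i : Fin n, yhat i = q ^ ((i : ℕ) + 1) / (1 - q))
    (y : EuclideanSpace ℝ (Fin n))
    (hy : y ∈ Submodule.span ℝ
      ((fun i : Fin n => EuclideanSpace.single i (1 : ℝ)) ''
        {i : Fin n | (i : ℕ) < k})) :
    ‖y - yhat‖ ≥ q ^ k / Real.sqrt 2 * ‖yhat‖ := by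
  have h1q : 0 < 1 - q := by linarith
  -- the submodule of vectors supported on {i < k}
  set P : Submodule ℝ (EuclideanSpace ℝ (Fin n)) :=
    { carrier := {v | ∀ i : Fin n, k ≤ (i : ℕ) → v i = 0}
      add_mem' := by
        intro a b ha hb i hi
        simp only [PiLp.add_apply, ha i hi, hb i hi, add_zero]
      zero_mem' := by intro i hi; rfl
      smul_mem' := by
        intro c a ha i hi
        simp only [PiLp.smul_apply, ha i hi, smul_zero] } with hP
  have hy0 : ∀ i : Fin n, k ≤ (i : ℕ) → y i = 0 := by
    have hle : Submodule.span ℝ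
        ((fun i : Fin n => EuclideanSpace.single i (1 : ℝ)) ''
          {i : Fin n | (i : ℕ) < k}) ≤ P := by
      rw [Submodule.span_le]
      rintro v ⟨i, hi, rfl⟩ j hj
      simp only [Set.mem_setOf_eq] at hi
      have : j ≠ i := by intro h; rw [h] at hj; omega
      simp [EuclideanSpace.single_apply, this]
    exact hle hy
  set r : ℝ := q ^ 2 with hrdef
  have hr0 : (0:ℝ) ≤ r := sq_nonneg q
  have hr1 : r ≤ 1 := by nlinarith
  have hsq : ∀ i : Fin n, (yhat i) ^ 2 = r ^ ((i:ℕ) + 1) / (1 - q) ^ 2 := by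
    intro i
    rw [hyhat, div_pow, hrdef, pow_right_comm]
  set S : ℝ := ∑ i : Fin n, (yhat i) ^ 2 with hS
  have hnorm_yhat : ‖yhat‖ ^ 2 = S := by
    rw [EuclideanSpace.norm_eq, Real.sq_sqrt (by positivity)]
    simp [hS, Real.norm_eq_abs, sq_abs]
  have hnorm_diff : ‖y - yhat‖ ^ 2 = ∑ i : Fin n, (y i - yhat i) ^ 2 := by
    rw [EuclideanSpace.norm_eq, Real.sq_sqrt (by positivity)]
    simp [Real.norm_eq_abs, sq_abs]
  -- lower bound the squared distance by the tail sum
  have hstep1 : ∑ i : Fin n, (if k ≤ (i:ℕ) then (yhat i) ^ 2 else 0)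
      ≤ ‖y - yhat‖ ^ 2 := by
    rw [hnorm_diff]
    apply Finset.sum_le_sum
    intro i _
    by_cases hik : k ≤ (i:ℕ)
    · simp only [hik, if_true, hy0 i hik, zero_sub, neg_sq, le_refl]
    · simp only [hik, if_false]; positivity
  -- rewrite the tail sum as an Ico sum of powers of r
  have hite : ∑ i : Fin n, (if k ≤ (i:ℕ) then (yhat i) ^ 2 else 0)
      = (∑ i ∈ Finset.Ico k n, r ^ (i + 1)) / (1 - q) ^ 2 := by
    have : ∀ i : Fin n, (if k ≤ (i:ℕ) then (yhat i) ^ 2 else 0)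
        = (if k ≤ (i:ℕ) then r ^ ((i:ℕ) + 1) else 0) / (1 - q) ^ 2 := by
      intro i
      by_cases hik : k ≤ (i:ℕ) <;> simp [hik, hsq i]
    rw [Finset.sum_congr rfl (fun i _ => this i), ← Finset.sum_div]
    congr 1
    rw [Fin.sum_univ_eq_sum_range (fun i => if k ≤ i then r ^ (i + 1) else 0)]
    rw [Finset.range_eq_Ico, ← Finset.sum_Ico_consecutive _ (Nat.zero_le k) (by omega)]
    have h1 : ∑ i ∈ Finset.Ico 0 k, (if k ≤ i then r ^ (i + 1) else 0) = 0 := by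
      apply Finset.sum_eq_zero
      intro i hi
      simp only [Finset.mem_Ico] at hi
      simp [Nat.not_le.mpr hi.2]
    have h2 : ∑ i ∈ Finset.Ico k n, (if k ≤ i then r ^ (i + 1) else 0)
        = ∑ i ∈ Finset.Ico k n, r ^ (i + 1) := by
      apply Finset.sum_congr rfl
      intro i hi
      simp only [Finset.mem_Ico] at hi
      simp [hi.1]
    rw [h1, h2, zero_add]
  have hSval : S = (∑ i ∈ Finset.range n, r ^ (i + 1)) / (1 - q) ^ 2 := by
    rw [hS, Finset.sum_congr rfl (fun i _ => hsq i), ← Finset.sum_div]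
    congr 1
    exact Fin.sum_univ_eq_sum_range (fun i => r ^ (i + 1)) n
  have hkey := geom_tail_ge r hr0 hr1 n k hk
  have hstep2 : r ^ k / 2 * S ≤ ‖y - yhat‖ ^ 2 := by
    rw [hSval]
    calc r ^ k / 2 * ((∑ i ∈ Finset.range n, r ^ (i + 1)) / (1 - q) ^ 2)
        = (r ^ k / 2 * ∑ i ∈ Finset.range n, r ^ (i + 1)) / (1 - q) ^ 2 := by ring
      _ ≤ (∑ i ∈ Finset.Ico k n, r ^ (i + 1)) / (1 - q) ^ 2 := by
          exact div_le_div_of_nonneg_right hkey (by positivity)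
      _ = _ := hite.symm
      _ ≤ ‖y - yhat‖ ^ 2 := hstep1
  -- conclude by taking square roots
  have hRHS0 : 0 ≤ q ^ k / Real.sqrt 2 * ‖yhat‖ := by positivity
  have hRHSsq : (q ^ k / Real.sqrt 2 * ‖yhat‖) ^ 2 = r ^ k / 2 * S := by
    rw [mul_pow, div_pow, Real.sq_sqrt (by norm_num : (0:ℝ) ≤ 2), hnorm_yhat, hrdef,
      ← pow_mul, mul_comm k 2, pow_mul]
  have hfinal : (q ^ k / Real.sqrt 2 * ‖yhat‖) ^ 2 ≤ ‖y - yhat‖ ^ 2 := by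
    rw [hRHSsq]; exact hstep2
  nlinarith [norm_nonneg (y - yhat), hRHS0]
end

section
/- The quartic equation 1 − (4+α)x + (6+2α+β)x² − (4+α)x³ + x⁴ = 0 (α, β > 0 as in the saddle-point construction) has a real root q with 1 − (1/2 + (1/(2√2))·√(L_x/μ_x + L²_{xy}/(μ_xμ_y) + L_y/μ_y))⁻¹ < q < 1 − (1/2 + (1/2)·√(L²_{xy}/(μ_xμ_y) + L_x/μ_x + L_y/μ_y − 1))⁻¹. -/
private lemma sq_sub_strictMono {a b : ℝ} (ha : 1/2 ≤ a) (hb : 1/2 ≤ b)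
    (hab : a ^ 2 - a < b ^ 2 - b) : a < b := by nlinarith

set_option maxHeartbeats 1600000 in
/-- Root estimation: the quartic equation
`1 - (4+α)x + (6+2α+β)x² - (4+α)x³ + x⁴ = 0`, with `α, β` as in the
saddle-point construction, has a real root `q` with
`1 - (1/2 + (1/(2√2))√(Lₓ/μₓ + L²ₓᵧ/(μₓμ_y) + L_y/μ_y))⁻¹ < q`
`< 1 - (1/2 + (1/2)√(L²ₓᵧ/(μₓμ_y) + Lₓ/μₓ + L_y/μ_y - 1))⁻¹`. -/
theorem quartic_root_estimation (Lx Ly Lxy μx μy Bx By α β : ℝ)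
    (hμx : 0 < μx) (hLx : μx < Lx) (hμy : 0 < μy) (hLy : μy < Ly)
    (hLxy : 0 < Lxy)
    (hBx : Bx = (Lx - μx) / 4) (hBy : By = (Ly - μy) / 4)
    (hα : α = Lxy ^ 2 / (4 * Bx * By) + μx / Bx + μy / By)
    (hβ : β = μx * μy / (Bx * By)) :
    ∃ q : ℝ,
      1 - (4 + α) * q + (6 + 2 * α + β) * q ^ 2 - (4 + α) * q ^ 3 + q ^ 4 = 0 ∧
      1 - (1 / 2 + 1 / (2 * Real.sqrt 2) *
          Real.sqrt (Lx / μx + Lxy ^ 2 / (μx * μy) + Ly / μy))⁻¹ < q ∧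
      q < 1 - (1 / 2 + 1 / 2 *
          Real.sqrt (Lxy ^ 2 / (μx * μy) + Lx / μx + Ly / μy - 1))⁻¹ := by
  have hBx' : 0 < Bx := by rw [hBx]; linarith
  have hBy' : 0 < By := by rw [hBy]; linarith
  have hβ' : 0 < β := by rw [hβ]; positivity
  have hα' : 0 < α := by rw [hα]; positivity
  have hLx0 : 0 < Lx := lt_trans hμx hLx
  have hLy0 : 0 < Ly := lt_trans hμy hLy
  set S : ℝ := Lx / μx + Lxy ^ 2 / (μx * μy) + Ly / μy with hS
  clear_value S
  have hS0 : 0 < S := by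
    have : 0 < Lx / μx := by positivity
    have : 0 < Ly / μy := by positivity
    have : 0 < Lxy ^ 2 / (μx * μy) := by positivity
    rw [hS]; linarith
  have hS2 : 2 < S := by
    have h1 : 1 < Lx / μx := (one_lt_div hμx).mpr hLx
    have h2 : 1 < Ly / μy := (one_lt_div hμy).mpr hLy
    have h3 : 0 < Lxy ^ 2 / (μx * μy) := by positivity
    rw [hS]; linarith
  -- key identity : β * (S - 2) = 4 * α
  have hLxB : Lx = 4 * Bx + μx := by rw [hBx]; ring
  have hLyB : Ly = 4 * By + μy := by rw [hBy]; ring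
  have hkey : β * (S - 2) = 4 * α := by
    rw [hα, hβ, hS, hLxB, hLyB]
    field_simp
    ring
  -- α² > 4β
  have hαβ : 4 * β < α ^ 2 := by
    have hc : 0 < Lxy ^ 2 / (4 * Bx * By) := by positivity
    have hd : 0 < μx / Bx + μy / By := by positivity
    have hd2 : (μx / Bx + μy / By) ^ 2 - 4 * β = (μx / Bx - μy / By) ^ 2 := by
      rw [hβ]; field_simp; ring
    have hsq := sq_nonneg (μx / Bx - μy / By)
    rw [hα]
    nlinarith [hc, hd, hsq, hd2]
  -- square roots
  have hsqS : Real.sqrt S ^ 2 = S := Real.sq_sqrt hS0.le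
  have hsqS0 : 0 ≤ Real.sqrt S := Real.sqrt_nonneg _
  have hsqS1 : Real.sqrt (S - 1) ^ 2 = S - 1 := Real.sq_sqrt (by linarith)
  have hsqS10 : 0 ≤ Real.sqrt (S - 1) := Real.sqrt_nonneg _
  have hsq2 : Real.sqrt 2 ^ 2 = 2 := Real.sq_sqrt (by norm_num)
  have hsq2pos : 0 < Real.sqrt 2 := Real.sqrt_pos.mpr (by norm_num)
  set r₁ : ℝ := 1 / 2 + 1 / (2 * Real.sqrt 2) * Real.sqrt S with hr₁
  set r₂ : ℝ := 1 / 2 + 1 / 2 * Real.sqrt (S - 1) with hr₂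
  clear_value r₁ r₂
  have hr₁pos : 0 < r₁ := by rw [hr₁]; positivity
  have hr₂pos : 0 < r₂ := by rw [hr₂]; positivity
  have ht₁ : r₁ ^ 2 - r₁ = S / 8 - 1 / 4 := by
    have ha : (1 / (2 * Real.sqrt 2) * Real.sqrt S) ^ 2 = S / 8 := by
      rw [mul_pow, div_pow, mul_pow, hsq2, hsqS]; ring
    have hb : r₁ ^ 2 - r₁ = (1 / (2 * Real.sqrt 2) * Real.sqrt S) ^ 2 - 1 / 4 := by
      rw [hr₁]; ring
    rw [hb, ha]
  have ht₂ : r₂ ^ 2 - r₂ = S / 4 - 1 / 2 := by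
    have ha : (1 / 2 * Real.sqrt (S - 1)) ^ 2 = (S - 1) / 4 := by
      rw [mul_pow, hsqS1]; ring
    have hb : r₂ ^ 2 - r₂ = (1 / 2 * Real.sqrt (S - 1)) ^ 2 - 1 / 4 := by
      rw [hr₂]; ring
    rw [hb, ha]; ring
  -- r₁ < r₂ since t is increasing past 1/2 and t₁ < t₂
  have hr₁₂ : r₁ < r₂ := by
    have h₁ : r₁ ^ 2 - r₁ < r₂ ^ 2 - r₂ := by rw [ht₁, ht₂]; linarith
    have h₂ : (1:ℝ)/2 ≤ r₁ := by
      have : 0 ≤ 1 / (2 * Real.sqrt 2) * Real.sqrt S := by positivity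
      rw [hr₁]; linarith
    have h₃ : (1:ℝ)/2 ≤ r₂ := by
      have : 0 ≤ 1 / 2 * Real.sqrt (S - 1) := by positivity
      rw [hr₂]; linarith
    exact sq_sub_strictMono h₂ h₃ h₁
  -- the transformed quartic
  set F : ℝ → ℝ := fun r => 1 + α * r + (β - α) * r ^ 2 - 2 * β * r ^ 3 + β * r ^ 4 with hF
  clear_value F
  have hFt : ∀ r : ℝ, F r = β * (r ^ 2 - r) ^ 2 - α * (r ^ 2 - r) + 1 := by
    intro r; rw [hF]; ring
  have hS2' : S - 2 = 4 * α / β := by field_simp; linarith [hkey]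
  have hFr₁ : F r₁ < 0 := by
    rw [hFt, ht₁]
    have h1 : S / 8 - 1 / 4 = α / (2 * β) := by
      rw [show S / 8 - 1/4 = (S - 2)/8 by ring, hS2']; field_simp; ring
    rw [h1]
    have : β * (α / (2 * β)) ^ 2 - α * (α / (2 * β)) + 1 = 1 - α ^ 2 / (4 * β) := by
      field_simp; ring
    rw [this]
    have : 1 < α ^ 2 / (4 * β) := (one_lt_div (by positivity)).mpr (by linarith)
    linarith
  have hFr₂ : F r₂ = 1 := by
    rw [hFt, ht₂]
    have h1 : S / 4 - 1 / 2 = α / β := by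
      rw [show S / 4 - 1/2 = (S - 2)/4 by ring, hS2']; field_simp
    rw [h1]
    field_simp
    ring
  -- IVT
  have hFc : ContinuousOn F (Set.Icc r₁ r₂) := by
    apply Continuous.continuousOn; rw [hF]; fun_prop
  have hmem : (0:ℝ) ∈ Set.Ioo (F r₁) (F r₂) := ⟨hFr₁, by rw [hFr₂]; norm_num⟩
  obtain ⟨r, hrmem, hr0⟩ := intermediate_value_Ioo hr₁₂.le hFc hmem
  have hrpos : 0 < r := lt_trans hr₁pos hrmem.1
  refine ⟨1 - 1 / r, ?_, ?_, ?_⟩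
  · have hq : 1 - (4 + α) * (1 - 1/r) + (6 + 2 * α + β) * (1 - 1/r) ^ 2
        - (4 + α) * (1 - 1/r) ^ 3 + (1 - 1/r) ^ 4
        = (1 + α * r + (β - α) * r ^ 2 - 2 * β * r ^ 3 + β * r ^ 4) / r ^ 4 := by
      field_simp
      ring
    rw [hq]
    have : 1 + α * r + (β - α) * r ^ 2 - 2 * β * r ^ 3 + β * r ^ 4 = F r := by rw [hF]
    rw [this, hr0]
    exact zero_div _
  · have h1 : r⁻¹ < r₁⁻¹ := by
      exact inv_strictAnti₀ hr₁pos hrmem.1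
    rw [one_div]
    linarith
  · have harg : Lxy ^ 2 / (μx * μy) + Lx / μx + Ly / μy - 1 = S - 1 := by rw [hS]; ring
    rw [harg]
    have h1 : r₂⁻¹ < r⁻¹ := by
      exact inv_strictAnti₀ hrpos hrmem.2
    rw [one_div, ← hr₂]
    linarith
end
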